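/- arXiv:2401.05085 — 8 statements merged into one kernel-verified Lean document; each statement's English description precedes it below -/
import Mathlib

section
/- If φ is an ordering of the vertices of a graph G that minimizes μ_G, then the sequence of right degrees is non-increasing: for all positions i < j, rd_φ(φ⁻¹(i)) ≥ rd_φ(φ⁻¹(j)). -/
/-!
Since `min p q = #{k | k < min p q}`, the cost of an ordering is `∑ₖ e(Tₖ)`, where `Tₖ` is the set
of vertices in position at least `k` and `e(S)` counts the edges inside `S`. Exchanging the
vertices `u` and `v` in adjacent positions `a` and `a + 1` changes only `T_{a+1}`, which is
`insert v T` before and `insert u T` after, with `T = T_{a+2}`. As `e(insert x T) = e(T) + |N(x) ∩ T|`,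
optimality gives `|N(v) ∩ T| ≤ |N(u) ∩ T|`; the left side is the right degree of `v` and the
right side is at most that of `u`.
-/

open Finset

variable {V : Type*} [Fintype V] [DecidableEq V]

/-- MSVC cost of an ordering `φ` (positions are `(φ v : ℕ) + 1`, i.e. in `{1,…,n}`). -/
def msvcCost {n : ℕ} (G : SimpleGraph V) [DecidableRel G.Adj] (φ : V ≃ Fin n) : ℕ :=
  ∑ e ∈ G.edgeFinset,
    Sym2.lift ⟨fun u v => min ((φ u : ℕ) + 1) ((φ v : ℕ) + 1), fun _ _ => min_comm _ _⟩ e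

/-- Right degree of `v` in the ordering `φ`. -/
def rightDeg {n : ℕ} (G : SimpleGraph V) [DecidableRel G.Adj] (φ : V ≃ Fin n) (v : V) : ℕ :=
  ((G.neighborFinset v).filter fun u => φ v < φ u).card

theorem SimpleGraph.card_edgeFinset_inter_sym2_insert (G : SimpleGraph V) [DecidableRel G.Adj]
    {S : Finset V} {x : V} (hx : x ∉ S) :
    #(G.edgeFinset ∩ (insert x S).sym2) = #(G.edgeFinset ∩ S.sym2) + #(G.neighborFinset x ∩ S) := by
  have hincident : G.edgeFinset ∩ (insert x S).image (fun y => s(x, y))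
      = (G.neighborFinset x ∩ S).image (fun y => s(x, y)) := by
    ext e
    simp only [mem_inter, mem_image, mem_insert, SimpleGraph.mem_edgeFinset,
      SimpleGraph.mem_neighborFinset]
    constructor
    · rintro ⟨he, y, rfl | hy, rfl⟩
      · exact (G.irrefl he).elim
      · exact ⟨y, ⟨he, hy⟩, rfl⟩
    · rintro ⟨y, ⟨hadj, hy⟩, rfl⟩
      exact ⟨hadj, y, Or.inr hy, rfl⟩
  have hdisj : Disjoint ((G.neighborFinset x ∩ S).image (fun y => s(x, y)))
      (G.edgeFinset ∩ S.sym2) := by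
    refine Finset.disjoint_left.mpr ?_
    simp only [mem_image, mem_inter, mem_sym2_iff]
    rintro _ ⟨y, -, rfl⟩ ⟨-, hS⟩
    exact hx (hS x (Sym2.mem_mk_left x y))
  rw [sym2_insert, inter_union_distrib_left, hincident, card_union_of_disjoint hdisj,
    card_image_of_injective _ fun _ _ => Sym2.congr_right.mp, add_comm]

section

variable {α : Type*} [Fintype α] {n : ℕ} (φ : α ≃ Fin n)

def orderTail (k : ℕ) : Finset α := {x | k ≤ (φ x : ℕ)}

@[simp]
theorem mem_orderTail {k : ℕ} {x : α} : x ∈ orderTail φ k ↔ k ≤ (φ x : ℕ) := by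
  simp [orderTail]

theorem orderTail_antitone : Antitone (orderTail φ) :=
  fun _ _ hkl _ => by
    simp only [mem_orderTail]
    omega

theorem orderTail_trans_swap_of_ne {a b : Fin n} (hab : (a : ℕ) + 1 = b) {k : ℕ} (hk : k ≠ b) :
    orderTail (φ.trans (Equiv.swap a b)) k = orderTail φ k := by
  ext x
  rw [mem_orderTail, mem_orderTail, Equiv.trans_apply, Equiv.swap_apply_def]
  split_ifs <;> simp only [Fin.ext_iff] at * <;> omega

end

section

variable {n : ℕ} (G : SimpleGraph V) [DecidableRel G.Adj] (φ : V ≃ Fin n)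

theorem orderTail_eq_insert (b : Fin n) :
    orderTail φ b = insert (φ.symm b) (orderTail φ (b + 1)) := by
  ext x
  simp only [mem_orderTail, mem_insert, Equiv.eq_symm_apply, Fin.ext_iff]
  omega

theorem msvcCost_eq_sum_card_edgeFinset_inter_orderTail :
    msvcCost G φ = ∑ k ∈ range n, #(G.edgeFinset ∩ (orderTail φ k).sym2) := by
  calc msvcCost G φ
      = ∑ e ∈ G.edgeFinset, ∑ k ∈ range n, if e ∈ (orderTail φ k).sym2 then 1 else 0 := by
        refine sum_congr rfl fun e _ => ?_
        induction e using Sym2.ind with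
        | h u v =>
          have hcount : {k ∈ range n | s(u, v) ∈ (orderTail φ k).sym2}
              = range (min ((φ u : ℕ) + 1) ((φ v : ℕ) + 1)) := by
            ext k
            simp only [mem_filter, mem_range, mk_mem_sym2_iff, mem_orderTail]
            omega
          rw [sum_boole, Nat.cast_id, hcount, card_range]
          rfl
    _ = ∑ k ∈ range n, #(G.edgeFinset ∩ (orderTail φ k).sym2) := by
        rw [sum_comm]
        simp only [sum_boole, Nat.cast_id, filter_mem_eq_inter]

theorem rightDeg_eq_card_neighborFinset_inter_orderTail (v : V) :
    rightDeg G φ v = #(G.neighborFinset v ∩ orderTail φ (φ v + 1)) := by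
  rw [rightDeg, ← filter_mem_eq_inter]
  simp only [mem_orderTail, Fin.lt_def]
  rfl

theorem card_neighborFinset_inter_orderTail_le_of_forall_msvcCost_le
    (hopt : ∀ ψ : V ≃ Fin n, msvcCost G φ ≤ msvcCost G ψ) {a b : Fin n} (hab : (a : ℕ) + 1 = b) :
    #(G.neighborFinset (φ.symm b) ∩ orderTail φ (b + 1))
      ≤ #(G.neighborFinset (φ.symm a) ∩ orderTail φ (b + 1)) := by
  set ψ := φ.trans (Equiv.swap a b)
  set T := orderTail φ (b + 1)
  have hφb : orderTail φ b = insert (φ.symm b) T := orderTail_eq_insert φ b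
  have hψb : orderTail ψ b = insert (φ.symm a) T := by
    rw [orderTail_eq_insert ψ b, orderTail_trans_swap_of_ne φ hab (by omega)]
    rw [Equiv.symm_trans_apply, Equiv.symm_swap, Equiv.swap_apply_right]
  have hb : φ.symm b ∉ T := by
    rw [mem_orderTail, φ.apply_symm_apply]
    omega
  have ha : φ.symm a ∉ T := by
    rw [mem_orderTail, φ.apply_symm_apply]
    omega
  have hrest : ∑ k ∈ (range n).erase b, #(G.edgeFinset ∩ (orderTail ψ k).sym2)
      = ∑ k ∈ (range n).erase b, #(G.edgeFinset ∩ (orderTail φ k).sym2) :=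
    sum_congr rfl fun k hk => by rw [orderTail_trans_swap_of_ne φ hab (ne_of_mem_erase hk)]
  have hcost := hopt ψ
  rw [msvcCost_eq_sum_card_edgeFinset_inter_orderTail,
    msvcCost_eq_sum_card_edgeFinset_inter_orderTail,
    ← add_sum_erase _ _ (mem_range.2 b.2), ← add_sum_erase _ _ (mem_range.2 b.2), hrest, hφb, hψb,
    G.card_edgeFinset_inter_sym2_insert hb, G.card_edgeFinset_inter_sym2_insert ha] at hcost
  omega

theorem rightDeg_symm_le_of_forall_msvcCost_le
    (hopt : ∀ ψ : V ≃ Fin n, msvcCost G φ ≤ msvcCost G ψ) {a b : Fin n} (hab : (a : ℕ) + 1 = b) :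
    rightDeg G φ (φ.symm b) ≤ rightDeg G φ (φ.symm a) := by
  rw [rightDeg_eq_card_neighborFinset_inter_orderTail,
    rightDeg_eq_card_neighborFinset_inter_orderTail, φ.apply_symm_apply, φ.apply_symm_apply, hab]
  calc #(G.neighborFinset (φ.symm b) ∩ orderTail φ (b + 1))
      ≤ #(G.neighborFinset (φ.symm a) ∩ orderTail φ (b + 1)) :=
        card_neighborFinset_inter_orderTail_le_of_forall_msvcCost_le G φ hopt hab
    _ ≤ #(G.neighborFinset (φ.symm a) ∩ orderTail φ b) := by
        gcongr
        exact orderTail_antitone φ (Nat.le_succ _)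

theorem antitone_rightDeg_symm_of_forall_msvcCost_le
    (hopt : ∀ ψ : V ≃ Fin n, msvcCost G φ ≤ msvcCost G ψ) :
    Antitone fun k => rightDeg G φ (φ.symm k) := by
  cases n with
  | zero => exact fun i => i.elim0
  | succ m =>
    exact Fin.antitone_iff_succ_le.mpr fun i =>
      rightDeg_symm_le_of_forall_msvcCost_le G φ hopt (by simp)

end

theorem stmt1 {n : ℕ} (G : SimpleGraph V) [DecidableRel G.Adj] (φ : V ≃ Fin n)
    (hopt : ∀ ψ : V ≃ Fin n, msvcCost G φ ≤ msvcCost G ψ)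
    (i j : Fin n) (hij : i < j) :
    rightDeg G φ (φ.symm j) ≤ rightDeg G φ (φ.symm i) :=
  antitone_rightDeg_symm_of_forall_msvcCost_le G φ hopt hij.le
end

section
/- Let φ be an ordering of G with vertices u, v at consecutive positions i and i+1 where u and v are adjacent and rd_φ(u) < rd_φ(v). Then the ordering φ* obtained by swapping the positions of u and v satisfies μ_G(φ*) − μ_G(φ) = rd_φ(u) − rd_φ(v) − 1 < 0. -/
open Finset

variable {V : Type*} [Fintype V] [DecidableEq V]

lemma incidenceFinset_eq_image (G : SimpleGraph V) [DecidableRel G.Adj] (a : V) :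
    G.incidenceFinset a = (G.neighborFinset a).image (fun w => s(a, w)) := by
  ext e
  induction e using Sym2.ind with
  | _ x y =>
    simp only [SimpleGraph.mem_incidenceFinset, SimpleGraph.mk'_mem_incidenceSet_iff,
      Finset.mem_image, SimpleGraph.mem_neighborFinset]
    constructor
    · rintro ⟨hxy, rfl | rfl⟩
      · exact ⟨y, hxy, rfl⟩
      · exact ⟨x, hxy.symm, Sym2.eq_swap⟩
    · rintro ⟨w, hw, he⟩
      rw [Sym2.eq_iff] at he
      rcases he with ⟨rfl, rfl⟩ | ⟨rfl, rfl⟩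
      · exact ⟨hw, Or.inl rfl⟩
      · exact ⟨hw.symm, Or.inr rfl⟩

set_option maxRecDepth 100000 in
theorem stmt2 {n : ℕ} (G : SimpleGraph V) [DecidableRel G.Adj] (φ : V ≃ Fin n)
    (u v : V) (hadj : G.Adj u v) (hconsec : (φ v : ℕ) = (φ u : ℕ) + 1)
    (hrd : rightDeg G φ u < rightDeg G φ v) :
    (msvcCost G ((Equiv.swap u v).trans φ) : ℤ) - (msvcCost G φ : ℤ)
        = (rightDeg G φ u : ℤ) - (rightDeg G φ v : ℤ) - 1 ∧
      (msvcCost G ((Equiv.swap u v).trans φ) : ℤ) - (msvcCost G φ : ℤ) < 0 := by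
  classical
  have huv : u ≠ v := hadj.ne
  set ψ : V ≃ Fin n := (Equiv.swap u v).trans φ with hψ
  have hψu : ψ u = φ v := by simp [hψ]
  have hψv : ψ v = φ u := by simp [hψ, Equiv.swap_apply_right]
  have hψw : ∀ w, w ≠ u → w ≠ v → ψ w = φ w := fun w h1 h2 => by
    simp [hψ, Equiv.swap_apply_of_ne_of_ne h1 h2]
  have hinj : ∀ a b : V, (φ a : ℕ) = (φ b : ℕ) → a = b := fun a b h =>
    φ.injective (Fin.ext h)
  set D : Sym2 V → ℤ := fun e =>
    ((Sym2.lift ⟨fun a b => min ((ψ a : ℕ) + 1) ((ψ b : ℕ) + 1), fun _ _ => min_comm _ _⟩ e : ℕ) : ℤ)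
      - ((Sym2.lift ⟨fun a b => min ((φ a : ℕ) + 1) ((φ b : ℕ) + 1), fun _ _ => min_comm _ _⟩ e : ℕ) : ℤ)
    with hD
  have hdiff : (msvcCost G ψ : ℤ) - (msvcCost G φ : ℤ) = ∑ e ∈ G.edgeFinset, D e := by
    rw [msvcCost, msvcCost, Nat.cast_sum, Nat.cast_sum, ← Finset.sum_sub_distrib]
  -- restrict the sum to edges incident to u or v
  have hzero : ∀ e ∈ G.edgeFinset, e ∉ G.incidenceFinset u ∪ G.incidenceFinset v → D e = 0 := by
    intro e he hne
    induction e using Sym2.ind with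
    | _ x y =>
      simp only [Finset.mem_union, SimpleGraph.mem_incidenceFinset,
        SimpleGraph.mk'_mem_incidenceSet_iff, not_or, not_and_or] at hne
      have hxy : G.Adj x y := by rwa [SimpleGraph.mem_edgeFinset, SimpleGraph.mem_edgeSet] at he
      have hx1 : x ≠ u := by rcases hne.1 with h | h; exacts [absurd hxy h, fun hh => h.1 hh.symm]
      have hy1 : y ≠ u := by rcases hne.1 with h | h; exacts [absurd hxy h, fun hh => h.2 hh.symm]
      have hx2 : x ≠ v := by rcases hne.2 with h | h; exacts [absurd hxy h, fun hh => h.1 hh.symm]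
      have hy2 : y ≠ v := by rcases hne.2 with h | h; exacts [absurd hxy h, fun hh => h.2 hh.symm]
      simp [hD, hψw x hx1 hx2, hψw y hy1 hy2]
  have hsub : G.incidenceFinset u ∪ G.incidenceFinset v ⊆ G.edgeFinset := by
    apply Finset.union_subset <;>
      · intro e he
        rw [SimpleGraph.mem_incidenceFinset] at he
        exact SimpleGraph.mem_edgeFinset.mpr he.1
  have hrestrict : ∑ e ∈ G.edgeFinset, D e
      = ∑ e ∈ G.incidenceFinset u ∪ G.incidenceFinset v, D e :=
    (Finset.sum_subset hsub hzero).symm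
  have hDuv : D s(u, v) = 0 := by
    simp only [hD, Sym2.lift_mk, hψu, hψv]
    omega
  -- intersection is the single edge s(u,v)
  have hinter : G.incidenceFinset u ∩ G.incidenceFinset v = {s(u, v)} := by
    ext e
    simp only [Finset.mem_inter, SimpleGraph.mem_incidenceFinset, Finset.mem_singleton]
    constructor
    · rintro ⟨h1, h2⟩
      have := G.incidenceSet_inter_incidenceSet_subset huv ⟨h1, h2⟩
      simpa using this
    · rintro rfl
      exact ⟨G.mk'_mem_incidenceSet_left_iff.mpr hadj,
        G.mk'_mem_incidenceSet_right_iff.mpr hadj⟩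
  have hsum_split : ∑ e ∈ G.incidenceFinset u ∪ G.incidenceFinset v, D e
      = ∑ e ∈ G.incidenceFinset u, D e + ∑ e ∈ G.incidenceFinset v, D e := by
    have := Finset.sum_union_inter (s₁ := G.incidenceFinset u) (s₂ := G.incidenceFinset v) (f := D)
    rw [hinter, Finset.sum_singleton, hDuv, add_zero] at this
    exact this
  -- sum over edges at u
  have hinj_u : ∀ a : V, Set.InjOn (fun w => s(a, w)) (G.neighborFinset a) := by
    intro a w _ w' _ h
    exact Sym2.congr_right.mp h
  have hvmem : v ∈ (G.neighborFinset u).filter fun w => φ u < φ w :=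
    Finset.mem_filter.mpr ⟨(SimpleGraph.mem_neighborFinset G u v).mpr hadj,
      Fin.lt_def.mpr (by omega)⟩
  have hsum_u : ∑ e ∈ G.incidenceFinset u, D e = (rightDeg G φ u : ℤ) - 1 := by
    rw [incidenceFinset_eq_image, Finset.sum_image (hinj_u u)]
    have hterm : ∀ w ∈ G.neighborFinset u,
        D s(u, w) = if (φ u : ℕ) < (φ w : ℕ) ∧ w ≠ v then 1 else 0 := by
      intro w hw
      have hadjw : G.Adj u w := (SimpleGraph.mem_neighborFinset G u w).mp hw
      have hwu : w ≠ u := fun h => G.irrefl (h ▸ hadjw)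
      by_cases hwv : w = v
      · subst hwv
        simp only [ne_eq, not_true_eq_false, and_false, if_false]
        exact hDuv
      · have h1 : (φ w : ℕ) ≠ (φ u : ℕ) := fun h => hwu (hinj w u h)
        have h2 : (φ w : ℕ) ≠ (φ v : ℕ) := fun h => hwv (hinj w v h)
        simp only [hD, Sym2.lift_mk, hψu, hψw w hwu hwv, hwv, ne_eq, not_false_eq_true,
          and_true]
        split_ifs <;> omega
    rw [Finset.sum_congr rfl hterm, Finset.sum_boole]
    have hfe : ((G.neighborFinset u).filter fun w => (φ u : ℕ) < (φ w : ℕ) ∧ w ≠ v)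
        = ((G.neighborFinset u).filter fun w => φ u < φ w).erase v := by
      ext w
      simp only [Finset.mem_filter, Finset.mem_erase, Fin.lt_def]
      tauto
    rw [hfe, Finset.card_erase_of_mem hvmem]
    have hpos : 1 ≤ ((G.neighborFinset u).filter fun w => φ u < φ w).card :=
      Finset.card_pos.mpr ⟨v, hvmem⟩
    have hrdu : rightDeg G φ u = ((G.neighborFinset u).filter fun w => φ u < φ w).card := rfl
    rw [hrdu]
    omega
  -- sum over edges at v
  have hsum_v : ∑ e ∈ G.incidenceFinset v, D e = -(rightDeg G φ v : ℤ) := by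
    rw [incidenceFinset_eq_image, Finset.sum_image (hinj_u v)]
    have hterm : ∀ w ∈ G.neighborFinset v,
        D s(v, w) = if (φ v : ℕ) < (φ w : ℕ) then -1 else 0 := by
      intro w hw
      have hadjw : G.Adj v w := (SimpleGraph.mem_neighborFinset G v w).mp hw
      have hwv : w ≠ v := fun h => G.irrefl (h ▸ hadjw)
      by_cases hwu : w = u
      · subst hwu
        have hlt : ¬ ((φ v : ℕ) < (φ w : ℕ)) := by omega
        simp only [hlt, if_false]
        rw [show s(v, w) = s(w, v) from Sym2.eq_swap]
        exact hDuv
      · have h1 : (φ w : ℕ) ≠ (φ u : ℕ) := fun h => hwu (hinj w u h)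
        have h2 : (φ w : ℕ) ≠ (φ v : ℕ) := fun h => hwv (hinj w v h)
        simp only [hD, Sym2.lift_mk, hψv, hψw w hwu hwv]
        split_ifs <;> omega
    rw [Finset.sum_congr rfl hterm]
    have : ∀ w ∈ G.neighborFinset v,
        (if (φ v : ℕ) < (φ w : ℕ) then (-1 : ℤ) else 0)
          = -(if (φ v : ℕ) < (φ w : ℕ) then (1 : ℤ) else 0) := by
      intro w _; split_ifs <;> simp
    rw [Finset.sum_congr rfl this, Finset.sum_neg_distrib, Finset.sum_boole]
    have hrdv : rightDeg G φ v = ((G.neighborFinset v).filter fun w => φ v < φ w).card := rfl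
    have hfe : ((G.neighborFinset v).filter fun w => (φ v : ℕ) < (φ w : ℕ))
        = ((G.neighborFinset v).filter fun w => φ v < φ w) := by
      ext w
      simp only [Finset.mem_filter, Fin.lt_def]
    rw [hfe, hrdv]
  have htotal : (msvcCost G ψ : ℤ) - (msvcCost G φ : ℤ)
      = (rightDeg G φ u : ℤ) - (rightDeg G φ v : ℤ) - 1 := by
    rw [hdiff, hrestrict, hsum_split, hsum_u, hsum_v]; ring
  refine ⟨htotal, ?_⟩
  rw [htotal]
  have : (rightDeg G φ u : ℤ) < (rightDeg G φ v : ℤ) := by exact_mod_cast hrd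
  omega
end

section
/- Let φ be an ordering of G with non-adjacent vertices u, v at consecutive positions i and i+1 such that rd_φ(u) < rd_φ(v). Then swapping u and v yields φ* with μ_G(φ*) − μ_G(φ) = rd_φ(u) − rd_φ(v) < 0. -/
open Finset

variable {V : Type*} [Fintype V] [DecidableEq V]

lemma edgeSum_indicator (G : SimpleGraph V) [DecidableRel G.Adj]
    (c : V) (p : V → Prop) [DecidablePred p] :
    ∑ e ∈ G.edgeFinset,
      Sym2.lift ⟨fun a b => (if a = c ∧ p b then (1:ℤ) else 0) + (if b = c ∧ p a then 1 else 0),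
        fun a b => by dsimp; rw [add_comm]⟩ e
      = (((G.neighborFinset c).filter p).card : ℤ) := by
  have step : ∀ e ∈ G.edgeFinset,
      Sym2.lift ⟨fun a b => (if a = c ∧ p b then (1:ℤ) else 0) + (if b = c ∧ p a then 1 else 0),
        fun a b => by dsimp; rw [add_comm]⟩ e
      = ∑ w ∈ (G.neighborFinset c).filter p, if e = s(c, w) then (1:ℤ) else 0 := by
    intro e he
    induction e with
    | _ a b =>
      rw [SimpleGraph.mem_edgeFinset, SimpleGraph.mem_edgeSet] at he
      rw [Sym2.lift_mk]
      by_cases hac : a = c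
      · subst hac
        have hbc : b ≠ a := fun h => (h ▸ he).ne rfl
        have : ∀ w ∈ (G.neighborFinset a).filter p,
            (if s(a, b) = s(a, w) then (1:ℤ) else 0) = if w = b then 1 else 0 := by
          intro w hw
          refine if_congr ?_ rfl rfl
          rw [Sym2.eq_iff]
          constructor
          · rintro (⟨-, rfl⟩ | ⟨rfl, rfl⟩) <;> simp_all
          · rintro rfl; left; exact ⟨rfl, rfl⟩
        rw [Finset.sum_congr rfl this, Finset.sum_ite_eq' _ b fun _ => (1:ℤ)]
        simp [Finset.mem_filter, hbc, he]
      · by_cases hbc : b = c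
        · subst hbc
          have : ∀ w ∈ (G.neighborFinset b).filter p,
              (if s(a, b) = s(b, w) then (1:ℤ) else 0) = if w = a then 1 else 0 := by
            intro w hw
            refine if_congr ?_ rfl rfl
            rw [Sym2.eq_iff]
            constructor
            · rintro (⟨rfl, rfl⟩ | ⟨rfl, -⟩) <;> simp_all
            · rintro rfl; right; exact ⟨rfl, rfl⟩
          rw [Finset.sum_congr rfl this, Finset.sum_ite_eq' _ a fun _ => (1:ℤ)]
          simp [Finset.mem_filter, hac, he.symm]
        · have : ∀ w ∈ (G.neighborFinset c).filter p,
              (if s(a, b) = s(c, w) then (1:ℤ) else 0) = 0 := by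
            intro w hw
            rw [if_neg]
            rw [Sym2.eq_iff]
            rintro (⟨rfl, -⟩ | ⟨-, rfl⟩) <;> simp_all
          rw [Finset.sum_congr rfl this]
          simp [hac, hbc]
  rw [Finset.sum_congr rfl step, Finset.sum_comm]
  have : ∀ w ∈ (G.neighborFinset c).filter p,
      (∑ e ∈ G.edgeFinset, if e = s(c, w) then (1:ℤ) else 0) = 1 := by
    intro w hw
    rw [Finset.sum_ite_eq' _ (s(c, w)) fun _ => (1:ℤ), if_pos]
    rw [SimpleGraph.mem_edgeFinset, SimpleGraph.mem_edgeSet]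
    simpa using (Finset.mem_filter.mp hw).1
  rw [Finset.sum_congr rfl this]
  simp

theorem stmt3 {n : ℕ} (G : SimpleGraph V) [DecidableRel G.Adj] (φ : V ≃ Fin n)
    (u v : V) (hne : u ≠ v) (hnadj : ¬ G.Adj u v) (hconsec : (φ v : ℕ) = (φ u : ℕ) + 1)
    (hrd : rightDeg G φ u < rightDeg G φ v) :
    (msvcCost G ((Equiv.swap u v).trans φ) : ℤ) - (msvcCost G φ : ℤ)
        = (rightDeg G φ u : ℤ) - (rightDeg G φ v : ℤ) ∧
      (msvcCost G ((Equiv.swap u v).trans φ) : ℤ) - (msvcCost G φ : ℤ) < 0 := by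
  set ψ : V ≃ Fin n := (Equiv.swap u v).trans φ with hψ
  have hψu : ψ u = φ v := by simp [hψ]
  have hψv : ψ v = φ u := by simp [hψ]
  have hψw : ∀ w, w ≠ u → w ≠ v → ψ w = φ w := fun w h1 h2 => by
    simp [hψ, Equiv.swap_apply_of_ne_of_ne h1 h2]
  have hval : ∀ a b : V, a ≠ b → (φ a : ℕ) ≠ (φ b : ℕ) := fun a b h hc =>
    h (φ.injective (Fin.val_injective hc))
  have key : (msvcCost G ψ : ℤ) - (msvcCost G φ : ℤ)
      = (rightDeg G φ u : ℤ) - (rightDeg G φ v : ℤ) := by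
    have perEdge : ∀ e ∈ G.edgeFinset,
        ((Sym2.lift ⟨fun a b => min ((ψ a : ℕ) + 1) ((ψ b : ℕ) + 1),
            fun _ _ => min_comm _ _⟩ e : ℕ) : ℤ)
          - ((Sym2.lift ⟨fun a b => min ((φ a : ℕ) + 1) ((φ b : ℕ) + 1),
            fun _ _ => min_comm _ _⟩ e : ℕ) : ℤ)
        = Sym2.lift ⟨fun a b => (if a = u ∧ φ v < φ b then (1:ℤ) else 0)
              + (if b = u ∧ φ v < φ a then 1 else 0),
            fun a b => by dsimp; rw [add_comm]⟩ e
          - Sym2.lift ⟨fun a b => (if a = v ∧ φ v < φ b then (1:ℤ) else 0)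
              + (if b = v ∧ φ v < φ a then 1 else 0),
            fun a b => by dsimp; rw [add_comm]⟩ e := by
      intro e he
      induction e with
      | _ a b =>
        rw [SimpleGraph.mem_edgeFinset, SimpleGraph.mem_edgeSet] at he
        simp only [Sym2.lift_mk]
        by_cases hau : a = u
        · subst hau
          have hbu : b ≠ a := fun h => (h ▸ he).ne rfl
          have hbv : b ≠ v := fun h => hnadj (h ▸ he)
          rw [hψu, hψw b hbu hbv]
          have h1 := hval b a hbu
          have h2 := hval b v hbv
          have h3 := hval a v (fun h => hne h)
          simp only [hbu, hbv, hne, Fin.lt_def, and_true, true_and, and_false, false_and,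
            if_false, if_true, eq_self_iff_true]
          split_ifs <;> push_cast <;> omega
        · by_cases hav : a = v
          · subst hav
            have hbv : b ≠ a := fun h => (h ▸ he).ne rfl
            have hbu : b ≠ u := fun h => hnadj (h ▸ he).symm
            rw [hψv, hψw b hbu hbv]
            have h1 := hval b a hbv
            have h2 := hval b u hbu
            have h3 := hval a u (fun h => hne h.symm)
            simp only [hbu, hbv, hne.symm, Fin.lt_def, and_true, true_and, and_false, false_and,
              if_false, if_true, eq_self_iff_true]
            split_ifs <;> push_cast <;> omega
          · by_cases hbu : b = u
            · subst hbu
              have hav' : a ≠ v := hav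
              rw [hψu, hψw a hau hav']
              have h1 := hval a b hau
              have h2 := hval a v hav'
              have h3 := hval b v (fun h => hne h)
              simp only [hau, hav, hne, Fin.lt_def, and_true, true_and, and_false, false_and,
                if_false, if_true, eq_self_iff_true]
              split_ifs <;> push_cast <;> omega
            · by_cases hbv : b = v
              · subst hbv
                rw [hψv, hψw a hau hav]
                have h1 := hval a b hav
                have h2 := hval a u hau
                have h3 := hval b u (fun h => hne h.symm)
                simp only [hau, hav, hbu, hne.symm, Fin.lt_def, and_true, true_and, and_false,
                  false_and, if_false, if_true, eq_self_iff_true]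
                split_ifs <;> push_cast <;> omega
              · rw [hψw a hau hav, hψw b hbu hbv]
                simp [hau, hav, hbu, hbv]
    have hrdu : (rightDeg G φ u : ℤ)
        = (((G.neighborFinset u).filter fun w => φ v < φ w).card : ℤ) := by
      unfold rightDeg
      congr 2
      apply Finset.filter_congr
      intro w hw
      rw [SimpleGraph.mem_neighborFinset] at hw
      have h1 := hval w u (fun h => (h ▸ hw).ne rfl)
      have h2 := hval w v (fun h => hnadj (h ▸ hw))
      simp only [Fin.lt_def]
      omega
    unfold msvcCost
    push_cast
    rw [← Finset.sum_sub_distrib, Finset.sum_congr rfl perEdge, Finset.sum_sub_distrib,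
      edgeSum_indicator G u (fun w => φ v < φ w), edgeSum_indicator G v (fun w => φ v < φ w),
      ← hrdu]
    rfl
  exact ⟨key, by rw [key]; omega⟩
end

section
/- Let φ be an ordering of a graph G in which two non-adjacent vertices u and v occupy consecutive positions i and i+1 and have equal right degrees. Then the ordering φ* obtained by swapping u and v satisfies μ_G(φ*) = μ_G(φ). -/
open Finset

variable {V : Type*} [Fintype V] [DecidableEq V]

/-!
Each edge contributes the position of its left endpoint, so the cost is `∑ v, pos v * rd v`.
Exchanging two non-adjacent vertices in consecutive positions changes no comparison along an edge,
hence no right degree; it only exchanges the positions of `u` and `v`, whose right degrees agree.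
-/

theorem Equiv.apply_swap_of_apply_eq {α β : Type*} [DecidableEq α] {f : α → β} {a b : α}
    (h : f a = f b) (x : α) : f (Equiv.swap a b x) = f x := by
  rw [Equiv.swap_apply_def]
  split_ifs <;> simp_all

omit [DecidableEq V] in
theorem msvcCost_eq_sum_mul_rightDeg {n : ℕ} (G : SimpleGraph V) [DecidableRel G.Adj]
    (φ : V ≃ Fin n) : msvcCost G φ = ∑ v, ((φ v : ℕ) + 1) * rightDeg G φ v := by
  simp only [msvcCost, rightDeg, mul_comm _ (card _), ← smul_eq_mul, ← sum_const, sum_sigma']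
  symm
  refine sum_bij (fun p _ => s(p.1, p.2)) ?_ ?_ ?_ ?_
  · rintro ⟨a, b⟩ hab
    simp_all
  · rintro ⟨a, b⟩ hab ⟨c, d⟩ hcd h
    simp only [mem_sigma, mem_filter, SimpleGraph.mem_neighborFinset] at hab hcd
    rcases Sym2.eq_iff.mp h with ⟨rfl, rfl⟩ | ⟨rfl, rfl⟩
    · rfl
    · exact absurd (hab.2.2.trans hcd.2.2) (lt_irrefl _)
  · refine Sym2.ind fun a b hab => ?_
    rw [SimpleGraph.mem_edgeFinset, SimpleGraph.mem_edgeSet] at hab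
    rcases lt_or_gt_of_ne (φ.injective.ne hab.ne) with h | h
    · exact ⟨⟨a, b⟩, by simp [hab, h], rfl⟩
    · exact ⟨⟨b, a⟩, by simp [hab.symm, h], Sym2.eq_swap⟩
  · rintro ⟨a, b⟩ hab
    simp only [mem_sigma, mem_filter, SimpleGraph.mem_neighborFinset] at hab
    simp [Fin.lt_def.mp hab.2.2, le_of_lt]

omit [Fintype V] in
theorem swap_trans_lt_swap_trans_iff {n : ℕ} (φ : V ≃ Fin n) {u v x y : V}
    (hconsec : (φ v : ℕ) = (φ u : ℕ) + 1) (hxy : x ≠ y) (huv : s(x, y) ≠ s(u, v)) :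
    (Equiv.swap u v).trans φ x < (Equiv.swap u v).trans φ y ↔ φ x < φ y := by
  -- Positions are distinct and those of `u`, `v` consecutive: no vertex lies strictly between them.
  have hval : ∀ {a b}, a ≠ b → (φ a : ℕ) ≠ φ b := fun h => Fin.val_injective.ne (φ.injective.ne h)
  simp only [Equiv.trans_apply, Fin.lt_def, Equiv.swap_apply_def]
  split_ifs <;> simp_all [Sym2.eq_swap] <;> grind

theorem rightDeg_swap_trans {n : ℕ} (G : SimpleGraph V) [DecidableRel G.Adj] (φ : V ≃ Fin n)
    {u v : V} (hnadj : ¬ G.Adj u v) (hconsec : (φ v : ℕ) = (φ u : ℕ) + 1) (w : V) :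
    rightDeg G ((Equiv.swap u v).trans φ) w = rightDeg G φ w := by
  refine congrArg card (filter_congr fun x hx => ?_)
  rw [SimpleGraph.mem_neighborFinset] at hx
  refine swap_trans_lt_swap_trans_iff φ hconsec hx.ne fun h => hnadj ?_
  rwa [← SimpleGraph.mem_edgeSet, ← h]

theorem stmt4_general {n : ℕ} (G : SimpleGraph V) [DecidableRel G.Adj] (φ : V ≃ Fin n)
    (u v : V) (hnadj : ¬ G.Adj u v) (hconsec : (φ v : ℕ) = (φ u : ℕ) + 1)
    (hrd : rightDeg G φ u = rightDeg G φ v) :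
    msvcCost G ((Equiv.swap u v).trans φ) = msvcCost G φ := by
  rw [msvcCost_eq_sum_mul_rightDeg, msvcCost_eq_sum_mul_rightDeg,
    ← Equiv.sum_comp (Equiv.swap u v)]
  refine sum_congr rfl fun w _ => ?_
  rw [rightDeg_swap_trans G φ hnadj hconsec, Equiv.apply_swap_of_apply_eq hrd, Equiv.trans_apply,
    Equiv.swap_apply_self]

theorem stmt4 {n : ℕ} (G : SimpleGraph V) [DecidableRel G.Adj] (φ : V ≃ Fin n)
    (u v : V) (hne : u ≠ v) (hnadj : ¬ G.Adj u v) (hconsec : (φ v : ℕ) = (φ u : ℕ) + 1)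
    (hrd : rightDeg G φ u = rightDeg G φ v) :
    msvcCost G ((Equiv.swap u v).trans φ) = msvcCost G φ :=
  stmt4_general G φ u v hnadj hconsec hrd
end

section
/- Let G contain a clique Q on the vertex set V(G) (i.e., G restricted to Q ⊆ V(G) is complete). Then for any ordering φ of V(G), μ_G(φ) ≥ Σ_{i=1}^{|Q|−1} i·(|Q|−i). -/
open Finset

variable {V : Type*} [Fintype V] [DecidableEq V]

theorem stmt7 {n : ℕ} (G : SimpleGraph V) [DecidableRel G.Adj] (Q : Finset V)
    (hQ : ∀ u ∈ Q, ∀ w ∈ Q, u ≠ w → G.Adj u w) (φ : V ≃ Fin n) :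
    ∑ i ∈ Finset.Icc 1 (Q.card - 1), i * (Q.card - i) ≤ msvcCost G φ := by
  classical
  set q := Q.card with hq
  -- r u = number of vertices of Q to the right of u
  set r : V → ℕ := fun u => (Q.filter fun w => φ u < φ w).card with hr
  -- monotonicity: later vertex has smaller r
  have hmono : ∀ u ∈ Q, ∀ w ∈ Q, φ u < φ w → r w < r u := by
    intro u hu w hw huw
    apply Finset.card_lt_card
    constructor
    · intro x hx
      simp only [hr, Finset.mem_filter] at hx ⊢
      exact ⟨hx.1, lt_trans huw hx.2⟩
    · intro hsub
      have hwmem : w ∈ Q.filter fun x => φ u < φ x := by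
        simp [hr, hw, huw]
      have := hsub hwmem
      simp [hr] at this
  have hrinj : Set.InjOn r Q := by
    intro u hu w hw huw
    by_contra hne
    rcases lt_trichotomy (φ u) (φ w) with h | h | h
    · exact absurd huw (Nat.ne_of_gt (hmono u hu w hw h))
    · exact hne (φ.injective (Fin.val_injective (by exact_mod_cast congrArg Fin.val h)))
    · exact absurd huw.symm (Nat.ne_of_gt (hmono w hw u hu h))
  have hrlt : ∀ u ∈ Q, r u < q := by
    intro u hu
    have h1 : (Q.filter fun w => φ u < φ w) ⊆ Q.erase u := by
      intro x hx
      simp only [Finset.mem_filter] at hx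
      refine Finset.mem_erase.2 ⟨?_, hx.1⟩
      rintro rfl; exact lt_irrefl _ hx.2
    calc r u ≤ (Q.erase u).card := Finset.card_le_card h1
      _ < q := by
          rw [Finset.card_erase_of_mem hu]
          exact Nat.sub_lt (Finset.card_pos.2 ⟨u, hu⟩) one_pos
  -- image of r on Q is range q
  have himg : Q.image r = Finset.range q := by
    apply Finset.eq_of_subset_of_card_le
    · intro j hj
      rcases Finset.mem_image.1 hj with ⟨u, hu, rfl⟩
      exact Finset.mem_range.2 (hrlt u hu)
    · rw [Finset.card_range, Finset.card_image_of_injOn hrinj]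
  -- key position bound: φ u + 1 ≥ q - r u
  have hpos : ∀ u ∈ Q, q - r u ≤ (φ u : ℕ) + 1 := by
    intro u hu
    have hsplit : (Q.filter fun w => φ u < φ w).card
        + (Q.filter fun w => ¬ φ u < φ w).card = q :=
      Finset.card_filter_add_card_filter_not _
    have hru : r u = (Q.filter fun w => φ u < φ w).card := rfl
    have hcard : (Q.filter fun w => ¬ φ u < φ w).card = q - r u := by omega
    rw [← hcard]
    have hinj : Set.InjOn (fun w => φ w) ((Q.filter fun w => ¬ φ u < φ w) : Finset V) :=
      fun a _ b _ hab => φ.injective hab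
    calc (Q.filter fun w => ¬ φ u < φ w).card
        = ((Q.filter fun w => ¬ φ u < φ w).image fun w => φ w).card :=
          (Finset.card_image_of_injOn hinj).symm
      _ ≤ (Finset.Iic (φ u)).card := by
          apply Finset.card_le_card
          intro x hx
          rcases Finset.mem_image.1 hx with ⟨w, hw, rfl⟩
          simp only [Finset.mem_filter, not_lt] at hw
          exact Finset.mem_Iic.2 hw.2
      _ = (φ u : ℕ) + 1 := Fin.card_Iic _
  -- the ordered-pairs set
  set P : Finset (V × V) := (Q ×ˢ Q).filter fun p => φ p.1 < φ p.2 with hP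
  -- chain step 1 : LHS = ∑_{j ∈ range q} j * (q - j)
  have step1 : ∑ i ∈ Finset.Icc 1 (q - 1), i * (q - i)
      = ∑ j ∈ Finset.range q, j * (q - j) := by
    rcases Nat.eq_zero_or_pos q with h0 | h0
    · simp [h0]
    · have : Finset.range q = insert 0 (Finset.Icc 1 (q - 1)) := by
        ext j
        simp only [Finset.mem_range, Finset.mem_insert, Finset.mem_Icc]
        omega
      rw [this, Finset.sum_insert (by simp)]
      simp
  -- chain step 2 : = ∑_{u ∈ Q} r u * (q - r u)
  have step2 : ∑ j ∈ Finset.range q, j * (q - j) = ∑ u ∈ Q, r u * (q - r u) := by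
    rw [← himg, Finset.sum_image (fun a ha b hb h => hrinj ha hb h)]
  -- chain step 3 : ≤ ∑_{u ∈ Q} (φ u + 1) * r u
  have step3 : ∑ u ∈ Q, r u * (q - r u) ≤ ∑ u ∈ Q, ((φ u : ℕ) + 1) * r u := by
    apply Finset.sum_le_sum
    intro u hu
    rw [mul_comm]
    exact Nat.mul_le_mul (hpos u hu) le_rfl
  -- chain step 4 : = ∑_{p ∈ P} (φ p.1 + 1)
  have step4 : ∑ u ∈ Q, ((φ u : ℕ) + 1) * r u = ∑ p ∈ P, ((φ p.1 : ℕ) + 1) := by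
    rw [hP, Finset.sum_filter, Finset.sum_product]
    apply Finset.sum_congr rfl
    intro u hu
    rw [hr]
    simp only [Finset.card_filter]
    rw [Finset.mul_sum]
    apply Finset.sum_congr rfl
    intro v hv
    by_cases h : φ u < φ v <;> simp [h]
  -- chain step 5 : ≤ msvcCost
  have step5 : ∑ p ∈ P, ((φ p.1 : ℕ) + 1) ≤ msvcCost G φ := by
    have hinj : Set.InjOn (fun p : V × V => s(p.1, p.2)) (P : Finset (V × V)) := by
      rintro ⟨a, b⟩ ha ⟨c, d⟩ hc h
      simp only [hP, Finset.coe_filter, Set.mem_setOf_eq, Finset.mem_product] at ha hc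
      rw [Sym2.eq_iff] at h
      rcases h with ⟨rfl, rfl⟩ | ⟨rfl, rfl⟩
      · rfl
      · exact absurd (lt_trans ha.2 hc.2) (lt_irrefl _)
    have hsub : P.image (fun p : V × V => s(p.1, p.2)) ⊆ G.edgeFinset := by
      intro e he
      rcases Finset.mem_image.1 he with ⟨⟨a, b⟩, hp, rfl⟩
      simp only [hP, Finset.mem_filter, Finset.mem_product] at hp
      rw [SimpleGraph.mem_edgeFinset, SimpleGraph.mem_edgeSet]
      exact hQ a hp.1.1 b hp.1.2 (fun h => by subst h; exact lt_irrefl _ hp.2)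
    calc ∑ p ∈ P, ((φ p.1 : ℕ) + 1)
        = ∑ e ∈ P.image (fun p : V × V => s(p.1, p.2)),
            Sym2.lift ⟨fun u v => min ((φ u : ℕ) + 1) ((φ v : ℕ) + 1),
              fun _ _ => min_comm _ _⟩ e := by
          rw [Finset.sum_image hinj]
          apply Finset.sum_congr rfl
          rintro ⟨a, b⟩ hp
          simp only [hP, Finset.mem_filter, Finset.mem_product] at hp
          simp only [Sym2.lift_mk]
          exact (min_eq_left (by omega : (φ a : ℕ) + 1 ≤ (φ b : ℕ) + 1)).symm
      _ ≤ msvcCost G φ := Finset.sum_le_sum_of_subset hsub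
  omega
end

section
/- Let S be a vertex cover of G of size k. Then there exists an optimal ordering φ for MSVC such that for every equivalence class A of the same-neighborhood relation on V(G)\S, the positions {φ(v) : v ∈ A} form a set of consecutive integers. -/
open Finset

variable {V : Type*} [Fintype V] [DecidableEq V]

/-!
Among the optimal orderings take one minimising the total distance between twins (vertices
outside `S` with equal neighbourhoods). If a twin class were not consecutive, two twins `a`, `b`
would sit at positions `p + 2 ≤ q` with no twin of theirs strictly between. Rotating the block
`[p, q]` one step right (bringing `b` next to `a`) or one step left (bringing `a` next to `b`)
gives two orderings whose costs add up to at most twice the original cost: the transposition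
`a ↔ b` is an automorphism of `G`, and after pairing every ordered pair of vertices with its image
under it, the inequality holds term by term as an inequality between positions. Hence both
rotations are optimal, yet their twin distances add up to less than twice the original one.
-/

open Equiv

def rotRight (p q t : ℕ) : ℕ := if t = q then p else if p ≤ t ∧ t < q then t + 1 else t

def rotLeft (p q t : ℕ) : ℕ := if t = p then q else if p < t ∧ t ≤ q then t - 1 else t

lemma rotLeft_rotRight {p q : ℕ} (hpq : p ≤ q) (t : ℕ) : rotLeft p q (rotRight p q t) = t := by
  unfold rotLeft rotRight; split_ifs <;> omega

lemma rotRight_left {p q : ℕ} (hpq : p < q) : rotRight p q p = p + 1 := by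
  simp [rotRight, hpq, hpq.ne]

lemma rotRight_right (p q : ℕ) : rotRight p q q = p := by simp [rotRight]

lemma rotLeft_left (p q : ℕ) : rotLeft p q p = q := by simp [rotLeft]

lemma rotLeft_right {p q : ℕ} (hpq : p < q) : rotLeft p q q = q - 1 := by
  simp [rotLeft, hpq, hpq.ne']

theorem Fin.val_cycleIcc {n : ℕ} {i j : Fin n} (hij : i ≤ j) (k : Fin n) :
    (Fin.cycleIcc i j k : ℕ) = rotRight i j k := by
  have : NeZero n := k.neZero
  rcases lt_or_ge k i with hki | hik
  · rw [Fin.cycleIcc_of_lt hki, rotRight]; split_ifs <;> omega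
  rcases lt_or_ge j k with hjk | hkj
  · rw [Fin.cycleIcc_of_gt hjk, rotRight]; split_ifs <;> omega
  rw [Fin.cycleIcc_of_le_of_le hik hkj, rotRight]
  rcases eq_or_ne k j with rfl | hkj'
  · simp
  · have hlt : (k : ℕ) < j := by omega
    rw [if_neg hkj', if_neg hlt.ne, if_pos ⟨hik, hlt⟩]
    exact Fin.val_add_one_of_lt' (by omega)

theorem Fin.val_cycleIcc_symm {n : ℕ} {i j : Fin n} (hij : i ≤ j) (k : Fin n) :
    ((Fin.cycleIcc i j).symm k : ℕ) = rotLeft i j k := by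
  conv_rhs => rw [← (Fin.cycleIcc i j).apply_symm_apply k, Fin.val_cycleIcc hij,
    rotLeft_rotRight (Fin.le_iff_val_le_val.mp hij)]

def rotSum (f : ℕ → ℕ → ℕ) (p q u v : ℕ) : ℕ :=
  f (rotRight p q u) (rotRight p q v) + f (rotLeft p q u) (rotLeft p q v)

-- The equalities are oriented so that `rcases _ with ⟨rfl, _⟩` eliminates `x`, not `a` or `b`.
lemma swap_apply_cases {α : Type*} [DecidableEq α] (a b x : α) :
    (a = x ∧ swap a b x = b) ∨ (b = x ∧ swap a b x = a) ∨ (x ≠ a ∧ x ≠ b ∧ swap a b x = x) := by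
  rcases eq_or_ne x a with rfl | ha
  · simp
  rcases eq_or_ne x b with rfl | hb
  · simp
  exact Or.inr (Or.inr ⟨ha, hb, swap_apply_of_ne_of_ne ha hb⟩)

lemma min_rotSum_le {p q u v : ℕ} (hpq : p < q) (hne : ¬(u = p ∧ v = q))
    (hne' : ¬(u = q ∧ v = p)) :
    rotSum (fun s t => min (s + 1) (t + 1)) p q u v
        + rotSum (fun s t => min (s + 1) (t + 1)) p q (swap p q u) (swap p q v)
      ≤ 2 * (min (u + 1) (v + 1) + min (swap p q u + 1) (swap p q v + 1)) := by
  unfold rotSum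
  rcases swap_apply_cases p q u with ⟨rfl, hsu⟩ | ⟨rfl, hsu⟩ | ⟨hup, huq, hsu⟩ <;>
  rcases swap_apply_cases p q v with ⟨rfl, hsv⟩ | ⟨rfl, hsv⟩ | ⟨hvp, hvq, hsv⟩ <;>
  simp only [hsu, hsv] <;>
  (try simp only [rotRight_left hpq, rotRight_right, rotLeft_left, rotLeft_right hpq]) <;>
  (try simp only [rotRight, rotLeft]) <;> (try split_ifs) <;> omega

lemma dist_rotSum_le {p q u v : ℕ} (hpq : p < q) (hu : u = p ∨ u = q → v ≤ p ∨ q ≤ v)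
    (hv : v = p ∨ v = q → u ≤ p ∨ q ≤ u) :
    rotSum Nat.dist p q u v + rotSum Nat.dist p q (swap p q u) (swap p q v)
      ≤ 2 * (Nat.dist u v + Nat.dist (swap p q u) (swap p q v)) := by
  simp only [rotSum, Nat.dist]
  rcases swap_apply_cases p q u with ⟨rfl, hsu⟩ | ⟨rfl, hsu⟩ | ⟨hup, huq, hsu⟩ <;>
  rcases swap_apply_cases p q v with ⟨rfl, hsv⟩ | ⟨rfl, hsv⟩ | ⟨hvp, hvq, hsv⟩ <;>
  simp only [hsu, hsv] <;>
  (try simp only [rotRight_left hpq, rotRight_right, rotLeft_left, rotLeft_right hpq]) <;>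
  (try simp only [rotRight, rotLeft]) <;> (try split_ifs) <;> omega

lemma dist_rotSum_lt {p q : ℕ} (hpq : p + 2 ≤ q) :
    rotSum Nat.dist p q p q + rotSum Nat.dist p q (swap p q p) (swap p q q)
      < 2 * (Nat.dist p q + Nat.dist (swap p q p) (swap p q q)) := by
  have hpq' : p < q := by omega
  simp only [rotSum, swap_apply_left, swap_apply_right, rotRight_left hpq', rotRight_right,
    rotLeft_left, rotLeft_right hpq', Nat.dist]
  omega

lemma sum_comp_involution {ι : Type*} {s : Finset ι} (f : ι → ℕ) {e : ι → ι}
    (he : ∀ i ∈ s, e i ∈ s) (hee : ∀ i ∈ s, e (e i) = i) :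
    ∑ i ∈ s, f (e i) = ∑ i ∈ s, f i :=
  sum_nbij' e e he he hee hee fun _ _ => rfl

lemma sum_le_sum_of_involution {ι : Type*} {s : Finset ι} {f g : ι → ℕ} {e : ι → ι}
    (he : ∀ i ∈ s, e i ∈ s) (hee : ∀ i ∈ s, e (e i) = i)
    (h : ∀ i ∈ s, f i + f (e i) ≤ g i + g (e i)) :
    ∑ i ∈ s, f i ≤ ∑ i ∈ s, g i := by
  have := sum_le_sum h
  rw [sum_add_distrib, sum_add_distrib, sum_comp_involution f he hee,
    sum_comp_involution g he hee] at this
  omega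

lemma sum_lt_sum_of_involution {ι : Type*} {s : Finset ι} {f g : ι → ℕ} {e : ι → ι}
    (he : ∀ i ∈ s, e i ∈ s) (hee : ∀ i ∈ s, e (e i) = i)
    (h : ∀ i ∈ s, f i + f (e i) ≤ g i + g (e i)) (hlt : ∃ i ∈ s, f i + f (e i) < g i + g (e i)) :
    ∑ i ∈ s, f i < ∑ i ∈ s, g i := by
  have := sum_lt_sum h hlt
  rw [sum_add_distrib, sum_add_distrib, sum_comp_involution f he hee,
    sum_comp_involution g he hee] at this
  omega

def pairSum {n : ℕ} (P : Finset (V × V)) (f : ℕ → ℕ → ℕ) (ψ : V ≃ Fin n) : ℕ :=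
  ∑ xy ∈ P, f (ψ xy.1) (ψ xy.2)

omit [Fintype V] [DecidableEq V] in
lemma pairSum_cycleIcc_add {n : ℕ} (P : Finset (V × V)) (f : ℕ → ℕ → ℕ) (φ : V ≃ Fin n)
    {p q : Fin n} (hpq : p ≤ q) :
    pairSum P f (φ.trans (Fin.cycleIcc p q)) + pairSum P f (φ.trans (Fin.cycleIcc p q).symm)
      = ∑ xy ∈ P, rotSum f p q (φ xy.1) (φ xy.2) := by
  simp only [pairSum, ← sum_add_distrib, trans_apply, Fin.val_cycleIcc hpq,
    Fin.val_cycleIcc_symm hpq, rotSum]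

omit [Fintype V] in
lemma val_apply_swap {n : ℕ} (φ : V ≃ Fin n) (a b x : V) :
    (φ (swap a b x) : ℕ) = swap (φ a : ℕ) (φ b) (φ x) :=
  ((Fin.val_injective.comp φ.injective).swap_apply a b x).symm

omit [Fintype V] in
lemma pairSum_cycleIcc_add_le {n : ℕ} {P : Finset (V × V)} {f : ℕ → ℕ → ℕ} (φ : V ≃ Fin n)
    {a b : V} (hab : φ a ≤ φ b) (hP : ∀ xy ∈ P, (swap a b xy.1, swap a b xy.2) ∈ P)
    (hf : ∀ xy ∈ P, let p := (φ a : ℕ); let q := (φ b : ℕ); let u := (φ xy.1 : ℕ);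
      let v := (φ xy.2 : ℕ); rotSum f p q u v + rotSum f p q (swap p q u) (swap p q v)
        ≤ 2 * (f u v + f (swap p q u) (swap p q v))) :
    pairSum P f (φ.trans (Fin.cycleIcc (φ a) (φ b)))
        + pairSum P f (φ.trans (Fin.cycleIcc (φ a) (φ b)).symm) ≤ 2 * pairSum P f φ := by
  rw [pairSum_cycleIcc_add P f φ hab, pairSum, mul_sum]
  refine sum_le_sum_of_involution (e := Prod.map (swap a b) (swap a b)) hP (by simp)
    fun xy hxy => ?_
  simpa only [Prod.map, val_apply_swap, mul_add] using hf xy hxy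

omit [Fintype V] in
lemma pairSum_cycleIcc_add_lt {n : ℕ} {P : Finset (V × V)} {f : ℕ → ℕ → ℕ} (φ : V ≃ Fin n)
    {a b : V} (hab : φ a ≤ φ b) (hP : ∀ xy ∈ P, (swap a b xy.1, swap a b xy.2) ∈ P)
    (hf : ∀ xy ∈ P, let p := (φ a : ℕ); let q := (φ b : ℕ); let u := (φ xy.1 : ℕ);
      let v := (φ xy.2 : ℕ); rotSum f p q u v + rotSum f p q (swap p q u) (swap p q v)
        ≤ 2 * (f u v + f (swap p q u) (swap p q v)))
    (hlt : ∃ xy ∈ P, let p := (φ a : ℕ); let q := (φ b : ℕ); let u := (φ xy.1 : ℕ);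
      let v := (φ xy.2 : ℕ); rotSum f p q u v + rotSum f p q (swap p q u) (swap p q v)
        < 2 * (f u v + f (swap p q u) (swap p q v))) :
    pairSum P f (φ.trans (Fin.cycleIcc (φ a) (φ b)))
        + pairSum P f (φ.trans (Fin.cycleIcc (φ a) (φ b)).symm) < 2 * pairSum P f φ := by
  rw [pairSum_cycleIcc_add P f φ hab, pairSum, mul_sum]
  obtain ⟨xy₀, hxy₀, hlt₀⟩ := hlt
  refine sum_lt_sum_of_involution (e := Prod.map (swap a b) (swap a b)) hP (by simp)
    (fun xy hxy => ?_) ⟨xy₀, hxy₀, ?_⟩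
  · simpa only [Prod.map, val_apply_swap, mul_add] using hf xy hxy
  · simpa only [Prod.map, val_apply_swap, mul_add] using hlt₀

lemma two_mul_msvcCost {n : ℕ} (G : SimpleGraph V) [DecidableRel G.Adj] (ψ : V ≃ Fin n) :
    2 * msvcCost G ψ
      = pairSum {xy : V × V | G.Adj xy.1 xy.2} (fun s t => min (s + 1) (t + 1)) ψ := by
  let g : Sym2 V → ℕ :=
    Sym2.lift ⟨fun u v => min ((ψ u : ℕ) + 1) ((ψ v : ℕ) + 1), fun _ _ => min_comm _ _⟩
  have hmaps : ∀ d ∈ (univ : Finset G.Dart), d.edge ∈ G.edgeFinset := fun d _ =>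
    SimpleGraph.mem_edgeFinset.2 d.edge_mem
  calc 2 * msvcCost G ψ = ∑ e ∈ G.edgeFinset, ∑ d : G.Dart with d.edge = e, g d.edge := by
        rw [msvcCost, mul_sum]
        refine sum_congr rfl fun e he => ?_
        rw [sum_congr rfl fun d hd => congrArg g (mem_filter.1 hd).2, sum_const, smul_eq_mul,
          G.dart_edge_fiber_card e (SimpleGraph.mem_edgeFinset.1 he)]
    _ = ∑ d : G.Dart, g d.edge := sum_fiberwise_of_maps_to hmaps _
    _ = _ := by
        refine sum_bij' (fun d _ => d.toProd) (fun xy h => ⟨xy, (mem_filter.1 h).2⟩) ?_ ?_ ?_ ?_ ?_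
          <;> simp [g, SimpleGraph.Dart.edge]

lemma SimpleGraph.adj_swap_iff {G : SimpleGraph V} [DecidableRel G.Adj] {a b : V}
    (hN : G.neighborFinset a = G.neighborFinset b) (x y : V) :
    G.Adj (swap a b x) (swap a b y) ↔ G.Adj x y := by
  have hswap (x : V) : G.neighborFinset (swap a b x) = G.neighborFinset x :=
    apply_swap_eq_self (v := fun x => G.neighborFinset x) hN x
  rw [← mem_neighborFinset, hswap, mem_neighborFinset, G.adj_comm, ← mem_neighborFinset, hswap,
    mem_neighborFinset, G.adj_comm]

lemma msvcCost_cycleIcc_add_le {n : ℕ} (G : SimpleGraph V) [DecidableRel G.Adj]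
    (φ : V ≃ Fin n) {a b : V} (hN : G.neighborFinset a = G.neighborFinset b) (hab : φ a < φ b) :
    msvcCost G (φ.trans (Fin.cycleIcc (φ a) (φ b)))
      + msvcCost G (φ.trans (Fin.cycleIcc (φ a) (φ b)).symm) ≤ 2 * msvcCost G φ := by
  have hnadj : ¬ G.Adj a b := fun h => by
    have : b ∈ G.neighborFinset b := hN ▸ (G.mem_neighborFinset a b).2 h
    simp at this
  have key := pairSum_cycleIcc_add_le (f := fun s t => min (s + 1) (t + 1)) φ hab.le
    (P := {xy : V × V | G.Adj xy.1 xy.2}) (by simp [G.adj_swap_iff hN]) fun xy hxy => by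
      have hxy : G.Adj xy.1 xy.2 := (mem_filter.1 hxy).2
      refine min_rotSum_le hab (fun ⟨h1, h2⟩ => hnadj ?_) (fun ⟨h1, h2⟩ => hnadj ?_)
      · rwa [φ.injective (Fin.ext h1), φ.injective (Fin.ext h2)] at hxy
      · rw [φ.injective (Fin.ext h1), φ.injective (Fin.ext h2)] at hxy
        exact hxy.symm
  rw [← two_mul_msvcCost, ← two_mul_msvcCost, ← two_mul_msvcCost] at key
  omega

def twinPairs (G : SimpleGraph V) [DecidableRel G.Adj] (S : Finset V) : Finset (V × V) :=
  {xy | xy.1 ∉ S ∧ xy.2 ∉ S ∧ G.neighborFinset xy.1 = G.neighborFinset xy.2}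

def twinSpread {n : ℕ} (G : SimpleGraph V) [DecidableRel G.Adj] (S : Finset V)
    (ψ : V ≃ Fin n) : ℕ :=
  pairSum (twinPairs G S) Nat.dist ψ

lemma twinSpread_cycleIcc_add_lt {n : ℕ} (G : SimpleGraph V) [DecidableRel G.Adj]
    (S : Finset V) (φ : V ≃ Fin n) {a b : V} (ha : a ∉ S) (hb : b ∉ S)
    (hN : G.neighborFinset a = G.neighborFinset b) (hab : (φ a : ℕ) + 2 ≤ φ b)
    (hgap : ∀ c, c ∉ S → G.neighborFinset c = G.neighborFinset a → ¬(φ a < φ c ∧ φ c < φ b)) :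
    twinSpread G S (φ.trans (Fin.cycleIcc (φ a) (φ b)))
      + twinSpread G S (φ.trans (Fin.cycleIcc (φ a) (φ b)).symm) < 2 * twinSpread G S φ := by
  have hmem (x : V) : swap a b x ∈ S ↔ x ∈ S :=
    iff_of_eq (apply_swap_eq_self (v := (· ∈ S)) (propext (iff_of_false ha hb)) x)
  have hnbr (x : V) : G.neighborFinset (swap a b x) = G.neighborFinset x :=
    apply_swap_eq_self (v := fun x => G.neighborFinset x) hN x
  have hclass (x : V) (hx : (φ x : ℕ) = φ a ∨ (φ x : ℕ) = φ b) :
      G.neighborFinset x = G.neighborFinset a := by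
    rcases hx with hx | hx <;> rw [φ.injective (Fin.ext hx)]
    exact hN.symm
  have houtside (x y : V) (hy : y ∉ S) (hxy : G.neighborFinset x = G.neighborFinset y)
      (hx : (φ x : ℕ) = φ a ∨ (φ x : ℕ) = φ b) : (φ y : ℕ) ≤ φ a ∨ (φ b : ℕ) ≤ φ y := by
    have := hgap y hy (hxy.symm.trans (hclass x hx))
    rw [Fin.lt_def, Fin.lt_def] at this
    omega
  refine pairSum_cycleIcc_add_lt φ (Fin.le_def.2 (by omega)) (fun xy hxy => ?_)
    (fun xy hxy => ?_) ⟨(a, b), by simp [twinPairs, ha, hb, hN], dist_rotSum_lt hab⟩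
  · simpa only [twinPairs, mem_filter, mem_univ, true_and, hmem, hnbr] using hxy
  · simp only [twinPairs, mem_filter, mem_univ, true_and] at hxy
    obtain ⟨hx, hy, hxy⟩ := hxy
    exact dist_rotSum_le (by omega) (houtside _ _ hy hxy) (houtside _ _ hx hxy.symm)

omit [DecidableEq V] in
lemma exists_consecutive_around {β : Type*} [LinearOrder β] {f : V → β}
    (hf : Function.Injective f) {P : V → Prop} [DecidablePred P] {u w z : V} (hu : P u)
    (hw : P w) (hz : ¬ P z) (huz : f u < f z) (hzw : f z < f w) :
    ∃ a b, P a ∧ P b ∧ f a < f z ∧ f z < f b ∧ ∀ c, P c → ¬(f a < f c ∧ f c < f b) := by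
  obtain ⟨a, ha, hamax⟩ := exists_max_image {c | P c ∧ f c < f z} f ⟨u, by simp [hu, huz]⟩
  obtain ⟨b, hb, hbmin⟩ := exists_min_image {c | P c ∧ f z < f c} f ⟨w, by simp [hw, hzw]⟩
  simp only [mem_filter, mem_univ, true_and] at ha hb hamax hbmin
  refine ⟨a, b, ha.1, hb.1, ha.2, hb.2, fun c hc ⟨hac, hcb⟩ => ?_⟩
  rcases lt_trichotomy (f c) (f z) with h | h | h
  · exact (hamax c ⟨hc, h⟩).not_gt hac
  · exact hz (hf h ▸ hc)
  · exact (hbmin c ⟨hc, h⟩).not_gt hcb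

lemma exists_optimal_forall_le {n : ℕ} (G : SimpleGraph V) [DecidableRel G.Adj]
    (hcard : Fintype.card V = n) (g : (V ≃ Fin n) → ℕ) :
    ∃ φ : V ≃ Fin n, (∀ ψ : V ≃ Fin n, msvcCost G φ ≤ msvcCost G ψ) ∧
      ∀ ψ : V ≃ Fin n, (∀ χ : V ≃ Fin n, msvcCost G ψ ≤ msvcCost G χ) → g φ ≤ g ψ := by
  classical
  have : Nonempty (V ≃ Fin n) := ⟨Fintype.equivFinOfCardEq hcard⟩
  obtain ⟨φ₀, -, hφ₀⟩ := exists_min_image univ (msvcCost G) (univ_nonempty (α := V ≃ Fin n))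
  obtain ⟨φ, hφ, hmin⟩ := exists_min_image {φ | ∀ ψ, msvcCost G φ ≤ msvcCost G ψ} g
    ⟨φ₀, mem_filter.2 ⟨mem_univ _, fun ψ => hφ₀ ψ (mem_univ _)⟩⟩
  exact ⟨φ, (mem_filter.1 hφ).2, fun ψ hψ => hmin ψ (mem_filter.2 ⟨mem_univ _, hψ⟩)⟩

theorem stmt10_general {n : ℕ} (G : SimpleGraph V) [DecidableRel G.Adj]
    (hcard : Fintype.card V = n) (S : Finset V) :
    ∃ φ : V ≃ Fin n, (∀ ψ : V ≃ Fin n, msvcCost G φ ≤ msvcCost G ψ) ∧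
      ∀ u w z : V, u ∉ S → w ∉ S → G.neighborFinset u = G.neighborFinset w →
        φ u < φ z → φ z < φ w →
        z ∉ S ∧ G.neighborFinset z = G.neighborFinset u := by
  obtain ⟨φ, hopt, hmin⟩ := exists_optimal_forall_le G hcard (twinSpread G S)
  refine ⟨φ, hopt, fun u w z hu hw huw huz hzw => ?_⟩
  by_contra hz
  obtain ⟨a, b, ⟨ha, haN⟩, ⟨hb, hbN⟩, haz, hzb, hgap⟩ :=
    exists_consecutive_around (P := fun c => c ∉ S ∧ G.neighborFinset c = G.neighborFinset u)
      φ.injective ⟨hu, rfl⟩ ⟨hw, huw.symm⟩ hz huz hzw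
  have hN : G.neighborFinset a = G.neighborFinset b := haN.trans hbN.symm
  set L := φ.trans (Fin.cycleIcc (φ a) (φ b))
  set R := φ.trans (Fin.cycleIcc (φ a) (φ b)).symm
  have hcost : msvcCost G L + msvcCost G R ≤ 2 * msvcCost G φ :=
    msvcCost_cycleIcc_add_le G φ hN (haz.trans hzb)
  have hLopt (χ : V ≃ Fin n) : msvcCost G L ≤ msvcCost G χ := by
    have := hopt χ; have := hopt R; omega
  have hRopt (χ : V ≃ Fin n) : msvcCost G R ≤ msvcCost G χ := by
    have := hopt χ; have := hopt L; omega
  have hspread : twinSpread G S L + twinSpread G S R < 2 * twinSpread G S φ :=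
    twinSpread_cycleIcc_add_lt G S φ ha hb hN (by rw [Fin.lt_def] at haz hzb; omega)
      fun c hc hcN => hgap c ⟨hc, hcN.trans haN⟩
  have := hmin L hLopt
  have := hmin R hRopt
  omega

theorem stmt10 {n k : ℕ} (G : SimpleGraph V) [DecidableRel G.Adj]
    (hcard : Fintype.card V = n) (S : Finset V)
    (hS : ∀ a b : V, G.Adj a b → a ∈ S ∨ b ∈ S) (hSk : S.card = k) :
    ∃ φ : V ≃ Fin n, (∀ ψ : V ≃ Fin n, msvcCost G φ ≤ msvcCost G ψ) ∧
      ∀ u w z : V, u ∉ S → w ∉ S → G.neighborFinset u = G.neighborFinset w →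
        φ u < φ z → φ z < φ w →
        z ∉ S ∧ G.neighborFinset z = G.neighborFinset u :=
  stmt10_general G hcard S
end

section
/- Let φ be an optimal ordering of G for MSVC. Then the right degree of the first vertex is maximal among right degrees, i.e., rd_φ(φ⁻¹(1)) ≥ rd_φ(v) for every vertex v. -/
open Finset

variable {V : Type*} [Fintype V] [DecidableEq V]

/-- Rewriting a sum over the edge set as a sum over ordered adjacent pairs,
ordered by `φ`. -/
lemma sum_edge_eq {n : ℕ} (G : SimpleGraph V) [DecidableRel G.Adj] (φ : V ≃ Fin n)
    (h : V → V → ℕ) (hsymm : ∀ a b, h a b = h b a) :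
    ∑ e ∈ G.edgeFinset, Sym2.lift ⟨h, hsymm⟩ e
      = ∑ ab ∈ (univ ×ˢ univ).filter
          (fun ab : V × V => G.Adj ab.1 ab.2 ∧ φ ab.1 < φ ab.2), h ab.1 ab.2 := by
  refine Eq.symm (Finset.sum_bij (fun ab _ => s(ab.1, ab.2)) ?_ ?_ ?_ ?_)
  · rintro ⟨a, b⟩ hab
    simp only [mem_filter] at hab
    simpa [SimpleGraph.mem_edgeFinset] using hab.2.1
  · rintro ⟨a, b⟩ hab ⟨c, d⟩ hcd heq
    simp only [mem_filter] at hab hcd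
    rw [Sym2.mk_eq_mk_iff] at heq
    rcases heq with h1 | h2
    · exact h1
    · exfalso
      simp only [Prod.swap_prod_mk, Prod.mk.injEq] at h2
      obtain ⟨rfl, rfl⟩ := h2
      exact absurd (hab.2.2.trans hcd.2.2) (lt_irrefl _)
  · intro e he
    induction e with
    | _ a b =>
      rw [SimpleGraph.mem_edgeFinset, SimpleGraph.mem_edgeSet] at he
      have hne : φ a ≠ φ b := fun hc => he.ne (φ.injective hc)
      rcases lt_or_gt_of_ne hne with hlt | hgt
      · exact ⟨(a, b), by simp [he, hlt], rfl⟩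
      · exact ⟨(b, a), by simp [he.symm, hgt], Sym2.eq_swap⟩
  · rintro ⟨a, b⟩ hab
    simp [Sym2.lift_mk]

/-- Cardinality of the slice of the ordered-pair set with first coordinate `x`. -/
lemma card_slice {n : ℕ} (G : SimpleGraph V) [DecidableRel G.Adj] (φ : V ≃ Fin n) (x : V) :
    (((univ ×ˢ univ).filter
          (fun ab : V × V => G.Adj ab.1 ab.2 ∧ φ ab.1 < φ ab.2)).filter
        (fun ab => ab.1 = x)).card = rightDeg G φ x := by
  rw [rightDeg]
  refine Finset.card_bij' (fun ab _ => ab.2) (fun b _ => (x, b)) ?_ ?_ ?_ ?_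
  · rintro ⟨a, b⟩ hab
    simp only [mem_filter, mem_product] at hab
    obtain ⟨⟨-, hadj, hlt⟩, rfl⟩ := hab
    simp [SimpleGraph.mem_neighborFinset, hadj, hlt]
  · intro b hb
    simp only [mem_filter, SimpleGraph.mem_neighborFinset] at hb
    simp [hb.1, hb.2]
  · rintro ⟨a, b⟩ hab
    simp only [mem_filter] at hab
    simp [hab.2]
  · intro b hb
    rfl

theorem stmt15 {n : ℕ} (hn : 0 < n) (G : SimpleGraph V) [DecidableRel G.Adj]
    (φ : V ≃ Fin n) (hopt : ∀ ψ : V ≃ Fin n, msvcCost G φ ≤ msvcCost G ψ) (v : V) :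
    rightDeg G φ v ≤ rightDeg G φ (φ.symm ⟨0, hn⟩) := by
  set u : V := φ.symm ⟨0, hn⟩ with hu
  by_cases hvu : v = u
  · simp [hvu]
  · have hφu : φ u = ⟨0, hn⟩ := φ.apply_symm_apply _
    set p : ℕ := (φ v : ℕ) with hpdef
    have hφv0 : φ v ≠ ⟨0, hn⟩ := by
      intro hc
      exact hvu (by rw [← φ.symm_apply_apply v, hc])
    have hp : 0 < p := by
      rcases Nat.eq_zero_or_pos p with h | h
      · exact absurd (Fin.ext h : φ v = ⟨0, hn⟩) hφv0
      · exact h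
    set ψ := φ.trans (Equiv.swap (⟨0, hn⟩ : Fin n) (φ v)) with hψ
    have hψv : ψ v = ⟨0, hn⟩ := by
      simp [hψ, Equiv.swap_apply_right]
    have hψu : ψ u = φ v := by
      simp [hψ, hφu, Equiv.swap_apply_left]
    have hψw : ∀ w, w ≠ u → w ≠ v → ψ w = φ w := by
      intro w hwu hwv
      have h1 : φ w ≠ ⟨0, hn⟩ := fun hc => hwu (by rw [← φ.symm_apply_apply w, hc])
      have h2 : φ w ≠ φ v := fun hc => hwv (φ.injective hc)
      simp [hψ, Equiv.swap_apply_of_ne_of_ne h1 h2]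
    set S := (univ ×ˢ univ).filter
        (fun ab : V × V => G.Adj ab.1 ab.2 ∧ φ ab.1 < φ ab.2) with hS
    have hcostφ : msvcCost G φ = ∑ ab ∈ S, ((φ ab.1 : ℕ) + 1) := by
      rw [msvcCost, sum_edge_eq G φ]
      refine Finset.sum_congr rfl ?_
      rintro ⟨a, b⟩ hab
      simp only [hS, mem_filter] at hab
      have := hab.2.2
      rw [Fin.lt_def] at this
      dsimp only
      exact min_eq_left (by omega)
    have hcostψ : msvcCost G ψ = ∑ ab ∈ S, min ((ψ ab.1 : ℕ) + 1) ((ψ ab.2 : ℕ) + 1) := by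
      rw [msvcCost]
      exact sum_edge_eq G φ (fun a b => min ((ψ a : ℕ) + 1) ((ψ b : ℕ) + 1))
        (fun _ _ => min_comm _ _)
    have h0 : ((⟨0, hn⟩ : Fin n) : ℕ) = 0 := rfl
    have key : ∀ ab ∈ S,
        min ((ψ ab.1 : ℕ) + 1) ((ψ ab.2 : ℕ) + 1) + (if ab.1 = v then p else 0)
          ≤ ((φ ab.1 : ℕ) + 1) + (if ab.1 = u then p else 0) := by
      rintro ⟨a, b⟩ hab
      dsimp only
      by_cases hav : a = v
      · have hm := min_le_left ((ψ a : ℕ) + 1) ((ψ b : ℕ) + 1)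
        have h1 : (ψ a : ℕ) = 0 := by rw [hav, hψv, h0]
        have h2 : (φ a : ℕ) = p := by rw [hav]
        rw [if_pos hav, if_neg (by rw [hav]; exact hvu)]
        omega
      · by_cases hau : a = u
        · have hm := min_le_left ((ψ a : ℕ) + 1) ((ψ b : ℕ) + 1)
          have h1 : (ψ a : ℕ) = p := by rw [hau, hψu]
          have h2 : (φ a : ℕ) = 0 := by rw [hau, hφu, h0]
          rw [if_neg hav, if_pos hau]
          omega
        · have hm := min_le_left ((ψ a : ℕ) + 1) ((ψ b : ℕ) + 1)
          have h1 : (ψ a : ℕ) = (φ a : ℕ) := by rw [hψw a hau hav]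
          rw [if_neg hav, if_neg hau]
          omega
    have hsum := Finset.sum_le_sum key
    rw [Finset.sum_add_distrib, Finset.sum_add_distrib] at hsum
    have hitev : ∑ ab ∈ S, (if ab.1 = v then p else 0) = rightDeg G φ v * p := by
      rw [← Finset.sum_filter, Finset.sum_const, smul_eq_mul, hS, card_slice]
    have hiteu : ∑ ab ∈ S, (if ab.1 = u then p else 0) = rightDeg G φ u * p := by
      rw [← Finset.sum_filter, Finset.sum_const, smul_eq_mul, hS, card_slice]
    rw [hitev, hiteu] at hsum
    have hBA : ∑ ab ∈ S, ((φ ab.1 : ℕ) + 1)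
        ≤ ∑ ab ∈ S, min ((ψ ab.1 : ℕ) + 1) ((ψ ab.2 : ℕ) + 1) := by
      rw [← hcostφ, ← hcostψ]; exact hopt ψ
    have hxy : rightDeg G φ v * p ≤ rightDeg G φ u * p := by
      have h1 : (∑ ab ∈ S, min ((ψ ab.1 : ℕ) + 1) ((ψ ab.2 : ℕ) + 1)) + rightDeg G φ v * p
          ≤ (∑ ab ∈ S, min ((ψ ab.1 : ℕ) + 1) ((ψ ab.2 : ℕ) + 1)) + rightDeg G φ u * p :=
        hsum.trans (Nat.add_le_add_right hBA _)
      exact Nat.le_of_add_le_add_left h1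
    exact Nat.le_of_mul_le_mul_right hxy hp
end

section
/- Let G be a graph with clique modulator M, and let u, w ∈ V(G)\M have the same neighborhood in M. For any ordering φ of V(G), swapping the positions of u and w yields an ordering with the same cost μ_G. -/
open Finset

variable {V : Type*} [Fintype V] [DecidableEq V]

theorem stmt18 {n : ℕ} (G : SimpleGraph V) [DecidableRel G.Adj] (M : Finset V)
    (hclique : ∀ u ∉ M, ∀ w ∉ M, u ≠ w → G.Adj u w)
    (u w : V) (hu : u ∉ M) (hw : w ∉ M)
    (hN : G.neighborFinset u ∩ M = G.neighborFinset w ∩ M) (φ : V ≃ Fin n) :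
    msvcCost G ((Equiv.swap u w).trans φ) = msvcCost G φ := by
  classical
  set σ := Equiv.swap u w with hσ
  have htwin : ∀ x, x ≠ u → x ≠ w → (G.Adj u x ↔ G.Adj w x) := by
    intro x hxu hxw
    by_cases hxM : x ∈ M
    · have := Finset.ext_iff.mp hN x
      simpa [SimpleGraph.mem_neighborFinset, hxM] using this
    · exact ⟨fun _ => hclique w hw x hxM (Ne.symm hxw),
        fun _ => hclique u hu x hxM (Ne.symm hxu)⟩
  have key : ∀ a b, G.Adj a b → G.Adj (σ a) (σ b) := by
    have hs : ∀ x, x ≠ u → x ≠ w → σ x = x := fun x h1 h2 =>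
      Equiv.swap_apply_of_ne_of_ne h1 h2
    have hsu : σ u = w := Equiv.swap_apply_left u w
    have hsw : σ w = u := Equiv.swap_apply_right u w
    intro a b hab
    by_cases hau : a = u
    · rw [hau] at hab ⊢
      by_cases hbw : b = w
      · rw [hbw] at hab ⊢; rw [hsu, hsw]; exact hab.symm
      · have hbu : b ≠ u := hab.ne'
        rw [hsu, hs b hbu hbw]; exact (htwin b hbu hbw).mp hab
    · by_cases haw : a = w
      · rw [haw] at hab ⊢
        by_cases hbu : b = u
        · rw [hbu] at hab ⊢; rw [hsw, hsu]; exact hab.symm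
        · have hbw : b ≠ w := hab.ne'
          rw [hsw, hs b hbu hbw]; exact (htwin b hbu hbw).mpr hab
      · rw [hs a hau haw]
        by_cases hbu : b = u
        · rw [hbu] at hab ⊢; rw [hsu]; exact ((htwin a hau haw).mp hab.symm).symm
        · by_cases hbw : b = w
          · rw [hbw] at hab ⊢; rw [hsw]; exact ((htwin a hau haw).mpr hab.symm).symm
          · rw [hs b hbu hbw]; exact hab
  have hadj : ∀ a b, G.Adj (σ a) (σ b) ↔ G.Adj a b := by
    intro a b
    refine ⟨fun h => ?_, key a b⟩
    have := key _ _ h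
    simpa [hσ] using this
  rw [msvcCost, msvcCost]
  refine Finset.sum_nbij' (fun e => Sym2.map σ e) (fun e => Sym2.map σ e) ?_ ?_ ?_ ?_ ?_
  · intro e he
    induction e with
    | _ x y =>
      simp only [SimpleGraph.mem_edgeFinset, SimpleGraph.mem_edgeSet, Sym2.map_pair_eq] at *
      exact key x y he
  · intro e he
    induction e with
    | _ x y =>
      simp only [SimpleGraph.mem_edgeFinset, SimpleGraph.mem_edgeSet, Sym2.map_pair_eq] at *
      exact key x y he
  · intro e _
    induction e with
    | _ x y => simp [hσ, Sym2.map_pair_eq]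
  · intro e _
    induction e with
    | _ x y => simp [hσ, Sym2.map_pair_eq]
  · intro e _
    induction e with
    | _ x y => simp [Sym2.map_pair_eq]
end
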